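/- Let 0 < p, q < ∞ and let r satisfy 1/r = 1/p + 1/q. There exists a constant C ≥ 1, depending only on p and q, such that: (a) for all real sequences y, z one has ‖y·z‖_{τℓ_r} ≤ C · ‖y‖_{τℓ_p} · ‖z‖_{τℓ_q}; and (b) every real sequence x with ‖x‖_{τℓ_r} < ∞ can be written as a coordinatewise product x = y·z of two sequences with ‖y‖_{τℓ_p} · ‖z‖_{τℓ_q} ≤ C · ‖x‖_{τℓ_r}. -/

import Mathlib

open ENNReal

/-- The Tandori norm `‖x‖_{τℓ_p} = (∑_{n=1}^∞ (sup_{k≥n} |x_k|)^p)^{1/p}`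
of a real sequence (indexed so that the entries of the sequence are `x 1, x 2, …`). -/
noncomputable def tlNorm (p : ℝ) (x : ℕ → ℝ) : ℝ≥0∞ :=
  (∑' n : ℕ, (⨆ (k : ℕ) (_ : n + 1 ≤ k), ENNReal.ofReal |x k|) ^ p) ^ (1 / p)

/-!
With `x̃ n = sup_{k > n} |x k|`, `‖x‖_{τℓ_p}` is the `ℓ_p` quasinorm of `x̃`. Since
`(y z)~ ≤ ỹ z̃`, part (a) is Hölder's inequality `‖ỹ z̃‖_r ≤ ‖ỹ‖_p ‖z̃‖_q` (valid for all
exponents with `1/r = 1/p + 1/q`). For (b), split `x = (sign x · |x|^{r/p}) · |x|^{r/q}`: taking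
powers commutes with suprema, so the factors have tail suprema `x̃^{r/p}` and `x̃^{r/q}` and the norms
multiply to exactly `‖x‖_{τℓ_r}`. Thus `C = 1` works.
-/

noncomputable def tailSup (x : ℕ → ℝ) (n : ℕ) : ℝ≥0∞ :=
  ⨆ (k : ℕ) (_ : n + 1 ≤ k), ENNReal.ofReal |x k|

theorem tlNorm_eq_tsum_tailSup (p : ℝ) (x : ℕ → ℝ) :
    tlNorm p x = (∑' n, tailSup x n ^ p) ^ (1 / p) := rfl

theorem tailSup_mul_le (y z : ℕ → ℝ) (n : ℕ) :
    tailSup (fun k => y k * z k) n ≤ tailSup y n * tailSup z n := by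
  refine iSup₂_le fun k hk => ?_
  rw [abs_mul, ENNReal.ofReal_mul (abs_nonneg _)]
  exact mul_le_mul' (le_iSup₂ (f := fun k (_ : n + 1 ≤ k) => ENNReal.ofReal |y k|) k hk)
    (le_iSup₂ (f := fun k (_ : n + 1 ≤ k) => ENNReal.ofReal |z k|) k hk)

theorem tailSup_of_abs_eq_rpow {w x : ℕ → ℝ} {a : ℝ} (ha : 0 < a)
    (hwx : ∀ k, |w k| = |x k| ^ a) (n : ℕ) : tailSup w n = tailSup x n ^ a := by
  simp only [tailSup, hwx, ← ENNReal.ofReal_rpow_of_nonneg (abs_nonneg _) ha.le]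
  simpa only [ENNReal.orderIsoRpow_apply] using
    ((ENNReal.orderIsoRpow a ha).map_iSup₂ fun k (_ : n + 1 ≤ k) => ENNReal.ofReal |x k|).symm

theorem tlNorm_of_abs_eq_rpow {w x : ℕ → ℝ} {r s : ℝ} (hr : 0 < r) (hs : 0 < s)
    (hwx : ∀ k, |w k| = |x k| ^ (r / s)) :
    tlNorm s w = (∑' n, tailSup x n ^ r) ^ (1 / s) := by
  simp only [tlNorm_eq_tsum_tailSup, tailSup_of_abs_eq_rpow (div_pos hr hs) hwx,
    ← ENNReal.rpow_mul, div_mul_cancel₀ _ hs.ne']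

theorem tsum_mul_rpow_le {r p q : ℝ} (hr : 0 < r) (hrp : r < p) (hpqr : 1 / r = 1 / p + 1 / q)
    (f g : ℕ → ℝ≥0∞) :
    (∑' n, (f n * g n) ^ r) ^ (1 / r) ≤
      (∑' n, f n ^ p) ^ (1 / p) * (∑' n, g n ^ q) ^ (1 / q) := by
  simpa only [MeasureTheory.lintegral_count, Pi.mul_apply] using
    ENNReal.lintegral_Lp_mul_le_Lq_mul_Lr hr hrp hpqr (MeasureTheory.Measure.count (α := ℕ)) (f := f) (g := g)
      measurable_from_top.aemeasurable measurable_from_top.aemeasurable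

theorem tlNorm_mul_le {r p q : ℝ} (hr : 0 < r) (hrp : r < p) (hpqr : 1 / r = 1 / p + 1 / q)
    (y z : ℕ → ℝ) : tlNorm r (fun n => y n * z n) ≤ tlNorm p y * tlNorm q z :=
  calc tlNorm r (fun n => y n * z n)
      ≤ (∑' n, (tailSup y n * tailSup z n) ^ r) ^ (1 / r) := by
        rw [tlNorm_eq_tsum_tailSup]
        gcongr with n
        exact tailSup_mul_le y z n
    _ ≤ tlNorm p y * tlNorm q z := tsum_mul_rpow_le hr hrp hpqr _ _

theorem sign_mul_rpow_mul_rpow {a b : ℝ} (hab : a + b = 1) (t : ℝ) :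
    SignType.sign t * |t| ^ a * |t| ^ b = t := by
  rw [mul_assoc, ← Real.rpow_add' (abs_nonneg t) (by simp [hab]), hab, Real.rpow_one,
    sign_mul_abs]

theorem abs_sign_mul_rpow {a : ℝ} (ha : a ≠ 0) (t : ℝ) :
    |SignType.sign t * |t| ^ a| = |t| ^ a := by
  rcases lt_trichotomy t 0 with ht | rfl | ht
  · simp [ht, abs_of_nonneg (Real.rpow_nonneg (abs_nonneg t) a)]
  · simp [Real.zero_rpow ha]
  · simp [ht, abs_of_nonneg (Real.rpow_nonneg (abs_nonneg t) a)]

theorem exists_mul_eq_tlNorm_mul_tlNorm {r p q : ℝ} (hr : 0 < r) (hp : 0 < p) (hq : 0 < q)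
    (hpqr : 1 / r = 1 / p + 1 / q) (x : ℕ → ℝ) :
    ∃ y z : ℕ → ℝ, (∀ n, x n = y n * z n) ∧ tlNorm p y * tlNorm q z = tlNorm r x := by
  have hsum : r / p + r / q = 1 := by
    rw [div_eq_mul_one_div r p, div_eq_mul_one_div r q, ← mul_add, ← hpqr, mul_one_div_cancel hr.ne']
  refine ⟨fun n => SignType.sign (x n) * |x n| ^ (r / p), fun n => |x n| ^ (r / q),
    fun n => (sign_mul_rpow_mul_rpow hsum (x n)).symm, ?_⟩
  rw [tlNorm_of_abs_eq_rpow hr hp fun k => abs_sign_mul_rpow (div_pos hr hp).ne' (x k),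
    tlNorm_of_abs_eq_rpow hr hq fun k => abs_of_nonneg (Real.rpow_nonneg (abs_nonneg _) _),
    ← ENNReal.rpow_add_of_nonneg _ _ (by positivity) (by positivity), ← hpqr,
    tlNorm_eq_tsum_tailSup]

/-- Bennett's product formula `τℓ_p ⊙ τℓ_q = τℓ_r`, where `1/r = 1/p + 1/q`. -/
theorem stmt_17 (p q r : ℝ) (hp : 0 < p) (hq : 0 < q) (hr : 1 / r = 1 / p + 1 / q) :
    ∃ C : ℝ, 1 ≤ C ∧
      (∀ y z : ℕ → ℝ,
        tlNorm r (fun n => y n * z n) ≤ ENNReal.ofReal C * (tlNorm p y * tlNorm q z)) ∧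
      (∀ x : ℕ → ℝ, tlNorm r x < ⊤ →
        ∃ y z : ℕ → ℝ, (∀ n, x n = y n * z n) ∧
          tlNorm p y * tlNorm q z ≤ ENNReal.ofReal C * tlNorm r x) := by
  have hr0 : 0 < r := one_div_pos.mp (by rw [hr]; positivity)
  have hrp : r < p := lt_of_one_div_lt_one_div hp (by rw [hr]; linarith [one_div_pos.mpr hq])
  refine ⟨1, le_rfl, fun y z => ?_, fun x _ => ?_⟩
  · simpa using tlNorm_mul_le hr0 hrp hr y z
  · obtain ⟨y, z, hxyz, hnorm⟩ := exists_mul_eq_tlNorm_mul_tlNorm hr0 hp hq hr x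
    exact ⟨y, z, hxyz, by simp [hnorm]⟩
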